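/- arXiv:1010.2630 — 2 statements merged into one kernel-verified Lean document; each statement's English description precedes it below -/
import Mathlib

section
/- For all points x, y in the open unit ball 𝔹ⁿ, both of the following lower bounds hold: tanh(ρ(x,y)/4) ≥ |x−y| / (2 − (|x|−|y|)²/2) and tanh(ρ(x,y)/4) ≥ |x−y| / (2 − (1/2)·(|x|−|y|)²/(1 − |x||y|)). -/
/-- Hyperbolic distance in the open unit ball of `ℝⁿ`:
`ρ(x,y) = 2 · arsinh(|x−y| / (√(1−|x|²)·√(1−|y|²)))`. -/
noncomputable def hypDistBall {n : ℕ} (x y : EuclideanSpace ℝ (Fin n)) : ℝ :=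
  2 * Real.arsinh (‖x - y‖ / (Real.sqrt (1 - ‖x‖ ^ 2) * Real.sqrt (1 - ‖y‖ ^ 2)))

/-!
With `a = ‖x‖`, `b = ‖y‖`, `d = ‖x - y‖` and `q = (1 - a²)(1 - b²)`, the half-angle formula gives
`tanh (ρ/4) = d / (√(q + d²) + √q)`. Since `d ≤ a + b` we have `q + d² ≤ (1 + ab)²`, and since
`q = (1 - ab)² - (a - b)²` the tangent-line bound for the square root gives
`√q ≤ (1 - ab) - (a - b)² / (2(1 - ab))`. Adding, the denominator is at most
`2 - (a - b)² / (2(1 - ab))`, which in turn is at most `2 - (a - b)² / 2`.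
-/

open Real

theorem Real.tanh_half (s : ℝ) : tanh (s / 2) = sinh s / (cosh s + 1) := by
  have hc : 0 < cosh (s / 2) := cosh_pos _
  conv_rhs => rw [← mul_div_cancel₀ s two_ne_zero, sinh_two_mul, cosh_two_mul, add_assoc, ← cosh_sq]
  rw [tanh_eq_sinh_div_cosh]
  field_simp
  ring

theorem Real.tanh_half_arsinh (t : ℝ) : tanh (arsinh t / 2) = t / (√(1 + t ^ 2) + 1) := by
  rw [tanh_half, sinh_arsinh, cosh_arsinh]

theorem Real.tanh_half_arsinh_div (d : ℝ) {p : ℝ} (hp : 0 < p) :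
    tanh (arsinh (d / p) / 2) = d / (√(p ^ 2 + d ^ 2) + p) := by
  have hsqrt : √(1 + (d / p) ^ 2) = √(p ^ 2 + d ^ 2) / p := by
    rw [← sqrt_sq hp.le, ← sqrt_div' _ (sq_nonneg p), sqrt_sq hp.le]
    congr 1
    field_simp
  rw [tanh_half_arsinh, hsqrt]
  field_simp

theorem Real.sqrt_sq_sub_le {u v : ℝ} (hu : 0 < u) (hv : v ≤ 2 * u ^ 2) :
    √(u ^ 2 - v) ≤ u - v / (2 * u) := by
  rw [sqrt_le_iff]
  constructor
  · rw [sub_nonneg, div_le_iff₀ (by positivity)]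
    nlinarith
  · have : (u - v / (2 * u)) ^ 2 = u ^ 2 - v + (v / (2 * u)) ^ 2 := by
      field_simp
      ring
    nlinarith [sq_nonneg (v / (2 * u))]

theorem tanh_quarter_hypDistBall {n : ℕ} {x y : EuclideanSpace ℝ (Fin n)}
    (hx : ‖x‖ < 1) (hy : ‖y‖ < 1) :
    tanh (hypDistBall x y / 4) =
      ‖x - y‖ / (√((1 - ‖x‖ ^ 2) * (1 - ‖y‖ ^ 2) + ‖x - y‖ ^ 2) +
        √((1 - ‖x‖ ^ 2) * (1 - ‖y‖ ^ 2))) := by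
  have hx' : 0 < 1 - ‖x‖ ^ 2 := by nlinarith [norm_nonneg x]
  have hy' : 0 < 1 - ‖y‖ ^ 2 := by nlinarith [norm_nonneg y]
  have hp : 0 < √(1 - ‖x‖ ^ 2) * √(1 - ‖y‖ ^ 2) := by positivity
  rw [hypDistBall, show (4 : ℝ) = 2 * 2 by norm_num, ← div_div, mul_div_cancel_left₀ _ two_ne_zero,
    tanh_half_arsinh_div _ hp, mul_pow, sq_sqrt hx'.le, sq_sqrt hy'.le, sqrt_mul hx'.le]

theorem sqrt_one_sub_sq_mul_one_sub_sq_add_sq_le {a b d : ℝ} (ha : 0 ≤ a) (hb : 0 ≤ b)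
    (hd : 0 ≤ d) (hdab : d ≤ a + b) :
    √((1 - a ^ 2) * (1 - b ^ 2) + d ^ 2) ≤ 1 + a * b := by
  rw [sqrt_le_iff]
  constructor
  · positivity
  · nlinarith

theorem sqrt_one_sub_sq_mul_one_sub_sq_le {a b : ℝ} (ha : |a| < 1) (hb : |b| < 1) :
    √((1 - a ^ 2) * (1 - b ^ 2)) ≤ (1 - a * b) - (1 / 2) * (a - b) ^ 2 / (1 - a * b) := by
  have hab : 0 < 1 - a * b := by
    have : |a * b| < 1 := by
      rw [abs_mul]
      exact mul_lt_one_of_nonneg_of_lt_one_left (abs_nonneg a) ha hb.le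
    linarith [le_abs_self (a * b)]
  have hq : (1 - a ^ 2) * (1 - b ^ 2) = (1 - a * b) ^ 2 - (a - b) ^ 2 := by ring
  have hq0 : 0 ≤ (1 - a ^ 2) * (1 - b ^ 2) :=
    mul_nonneg (sub_nonneg.2 ((sq_lt_one_iff_abs_lt_one a).2 ha).le)
      (sub_nonneg.2 ((sq_lt_one_iff_abs_lt_one b).2 hb).le)
  calc √((1 - a ^ 2) * (1 - b ^ 2)) ≤ (1 - a * b) - (a - b) ^ 2 / (2 * (1 - a * b)) := by
        rw [hq]
        exact sqrt_sq_sub_le hab (by nlinarith [sq_nonneg (1 - a * b)])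
    _ = (1 - a * b) - (1 / 2) * (a - b) ^ 2 / (1 - a * b) := by rw [one_div_mul_eq_div, div_div]

theorem tanh_quarter_hypDist_lower_bound_three {n : ℕ} (x y : EuclideanSpace ℝ (Fin n))
    (hx : ‖x‖ < 1) (hy : ‖y‖ < 1) :
    Real.tanh (hypDistBall x y / 4) ≥ ‖x - y‖ / (2 - (‖x‖ - ‖y‖) ^ 2 / 2) ∧
    Real.tanh (hypDistBall x y / 4) ≥
      ‖x - y‖ / (2 - (1 / 2) * (‖x‖ - ‖y‖) ^ 2 / (1 - ‖x‖ * ‖y‖)) := by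
  have hq : 0 < (1 - ‖x‖ ^ 2) * (1 - ‖y‖ ^ 2) :=
    mul_pos (by nlinarith [norm_nonneg x]) (by nlinarith [norm_nonneg y])
  have hxy : ‖x‖ * ‖y‖ < 1 := mul_lt_one_of_nonneg_of_lt_one_left (norm_nonneg x) hx hy.le
  have hden := add_le_add
    (sqrt_one_sub_sq_mul_one_sub_sq_add_sq_le (norm_nonneg x) (norm_nonneg y)
      (norm_nonneg (x - y)) (norm_sub_le x y))
    (sqrt_one_sub_sq_mul_one_sub_sq_le ((abs_norm x).trans_lt hx) ((abs_norm y).trans_lt hy))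
  have hpos : 0 < √((1 - ‖x‖ ^ 2) * (1 - ‖y‖ ^ 2) + ‖x - y‖ ^ 2) +
      √((1 - ‖x‖ ^ 2) * (1 - ‖y‖ ^ 2)) :=
    add_pos_of_nonneg_of_pos (sqrt_nonneg _) (sqrt_pos.2 hq)
  have hsharp : ‖x - y‖ / (2 - (1 / 2) * (‖x‖ - ‖y‖) ^ 2 / (1 - ‖x‖ * ‖y‖)) ≤
      tanh (hypDistBall x y / 4) := by
    rw [tanh_quarter_hypDistBall hx hy]
    exact div_le_div_of_nonneg_left (norm_nonneg _) hpos (by linarith)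
  have hcompare : (‖x‖ - ‖y‖) ^ 2 / 2 ≤ (1 / 2) * (‖x‖ - ‖y‖) ^ 2 / (1 - ‖x‖ * ‖y‖) := by
    rw [one_div_mul_eq_div]
    exact le_div_self (by positivity) (by linarith) (sub_le_self 1 (by positivity))
  have hweak : ‖x - y‖ / (2 - (‖x‖ - ‖y‖) ^ 2 / 2) ≤
      ‖x - y‖ / (2 - (1 / 2) * (‖x‖ - ‖y‖) ^ 2 / (1 - ‖x‖ * ‖y‖)) :=
    div_le_div_of_nonneg_left (norm_nonneg _) (by linarith) (by linarith)
  exact ⟨hweak.trans hsharp, hsharp⟩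
end

section
/- For all points x, y in the open unit ball 𝔹ⁿ one has tanh(ρ(x,y)/4) ≥ |x−y| / √( |x−y|² + 4·√(1−|x|²)·√(1−|y|²) ). -/
namespace Real

theorem tanh_half_s15 (t : ℝ) : tanh (t / 2) = sinh t / (1 + cosh t) := by
  obtain ⟨u, rfl⟩ : ∃ u, t = 2 * u := ⟨t / 2, by ring⟩
  have hu := cosh_pos u
  rw [mul_div_cancel_left₀ u two_ne_zero, tanh_eq_sinh_div_cosh, sinh_two_mul, cosh_two_mul,
    sinh_sq, div_eq_div_iff hu.ne' (by nlinarith)]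
  ring

theorem tanh_half_arsinh_div_s15 (d : ℝ) {P : ℝ} (hP : 0 < P) :
    tanh (arsinh (d / P) / 2) = d / (P + √(P ^ 2 + d ^ 2)) := by
  have hcosh : √(1 + (d / P) ^ 2) = √(P ^ 2 + d ^ 2) / P := by
    rw [show 1 + (d / P) ^ 2 = (P ^ 2 + d ^ 2) / P ^ 2 by field_simp, sqrt_div' _ (by positivity),
      sqrt_sq hP.le]
  rw [tanh_half_s15, sinh_arsinh, cosh_arsinh, hcosh]
  field_simp

theorem add_sqrt_sq_add_sq_le_sqrt {d P : ℝ} (hP : 0 ≤ P) (h : d ^ 2 ≤ 4 * (1 - P)) :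
    P + √(P ^ 2 + d ^ 2) ≤ √(d ^ 2 + 4 * P) := by
  have hroot : √(P ^ 2 + d ^ 2) ≤ 2 - P := sqrt_le_iff.2 ⟨by nlinarith, by nlinarith⟩
  have hsq := sq_sqrt (by positivity : 0 ≤ P ^ 2 + d ^ 2)
  rw [le_sqrt (by positivity) (by positivity)]
  nlinarith [mul_le_mul_of_nonneg_left hroot hP]

end Real

theorem norm_sub_sq_le_four_mul_one_sub_sqrt_mul_sqrt {E : Type*} [SeminormedAddCommGroup E]
    {x y : E} (hx : ‖x‖ ≤ 1) (hy : ‖y‖ ≤ 1) :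
    ‖x - y‖ ^ 2 ≤ 4 * (1 - √(1 - ‖x‖ ^ 2) * √(1 - ‖y‖ ^ 2)) := by
  have hu : 0 ≤ 1 - ‖x‖ ^ 2 := by nlinarith [norm_nonneg x]
  have hv : 0 ≤ 1 - ‖y‖ ^ 2 := by nlinarith [norm_nonneg y]
  have amgm : 2 * (√(1 - ‖x‖ ^ 2) * √(1 - ‖y‖ ^ 2)) ≤ (1 - ‖x‖ ^ 2) + (1 - ‖y‖ ^ 2) := by
    nlinarith [sq_nonneg (√(1 - ‖x‖ ^ 2) - √(1 - ‖y‖ ^ 2)), Real.sq_sqrt hu, Real.sq_sqrt hv]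
  have htri : ‖x - y‖ ≤ ‖x‖ + ‖y‖ := norm_sub_le x y
  nlinarith [norm_nonneg (x - y), sq_nonneg (‖x‖ - ‖y‖)]

theorem tanh_quarter_hypDist_lower_bound_six {n : ℕ} (x y : EuclideanSpace ℝ (Fin n))
    (hx : ‖x‖ < 1) (hy : ‖y‖ < 1) :
    Real.tanh (hypDistBall x y / 4) ≥
      ‖x - y‖ / Real.sqrt (‖x - y‖ ^ 2 +
        4 * Real.sqrt (1 - ‖x‖ ^ 2) * Real.sqrt (1 - ‖y‖ ^ 2)) := by
  set P := √(1 - ‖x‖ ^ 2) * √(1 - ‖y‖ ^ 2)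
  have hP : 0 < P := mul_pos (Real.sqrt_pos.2 (by nlinarith [norm_nonneg x]))
    (Real.sqrt_pos.2 (by nlinarith [norm_nonneg y]))
  have hquarter : hypDistBall x y / 4 = Real.arsinh (‖x - y‖ / P) / 2 := by
    rw [hypDistBall]; ring
  rw [hquarter, Real.tanh_half_arsinh_div_s15 _ hP, mul_assoc, ge_iff_le]
  exact div_le_div_of_nonneg_left (norm_nonneg _) (by positivity)
    (Real.add_sqrt_sq_add_sq_le_sqrt hP.le
      (norm_sub_sq_le_four_mul_one_sub_sqrt_mul_sqrt hx.le hy.le))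
end
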